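/- Suppose G is a strong k-chromatic-choosable graph with n vertices and m edges that does not satisfy the edge condition, and let d = m − n(k−2) > 0. If p is a positive integer with d ≤ p(2k+p−3)/2, then G ∨ K_p is a strong (k+p)-chromatic-choosable graph that satisfies the edge condition, i.e., m + p(p−1)/2 + np ≤ (n+p)(k+p−2). -/

import Mathlib

open SimpleGraph Finset

section ListColoringDefs

variable {V : Type*}

/-- `f` is a proper coloring of `G` choosing each color from the list `L v`. -/
def IsProperListColoring (G : SimpleGraph V) (L : V → Finset ℕ) (f : V → ℕ) : Prop :=
  (∀ v, f v ∈ L v) ∧ ∀ u v, G.Adj u v → f u ≠ f v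

/-- `G` admits a proper coloring from the list assignment `L`. -/
def ListColorable (G : SimpleGraph V) (L : V → Finset ℕ) : Prop :=
  ∃ f, IsProperListColoring G L f

/-- `G` is colorable from every list assignment with lists of size at least `m`. -/
def Choosable (G : SimpleGraph V) (m : ℕ) : Prop :=
  ∀ L : V → Finset ℕ, (∀ v, m ≤ (L v).card) → ListColorable G L

/-- The list chromatic number of `G`. -/
noncomputable def listChromaticNumber (G : SimpleGraph V) : ℕ :=
  sInf { m | Choosable G m }

/-- `G` is strong `k`-chromatic-choosable: `χ(G) = k` and every `(k-1)`-assignment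
from which `G` is not colorable is constant. -/
def StrongCC (G : SimpleGraph V) (k : ℕ) : Prop :=
  G.chromaticNumber = (k : ℕ∞) ∧
    ∀ L : V → Finset ℕ, (∀ v, (L v).card = k - 1) → ¬ ListColorable G L →
      ∀ u v : V, L u = L v

/-- The number of proper `L`-colorings of `G`. -/
noncomputable def numColorings (G : SimpleGraph V) (L : V → Finset ℕ) : ℕ :=
  Set.ncard { f : V → ℕ | IsProperListColoring G L f }

/-- The list color function `P_ℓ(G,k)`: the minimum number of proper `L`-colorings
over all `k`-assignments `L`. -/
noncomputable def listColorFunction (G : SimpleGraph V) (k : ℕ) : ℕ :=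
  sInf { n | ∃ L : V → Finset ℕ, (∀ v, (L v).card = k) ∧ n = numColorings G L }

/-- The chromatic polynomial `P(G,k)`: the number of proper colorings with colors
from `{0, …, k-1}`. -/
noncomputable def chromPoly (G : SimpleGraph V) (k : ℕ) : ℕ :=
  numColorings G (fun _ => Finset.range k)

/-- The join `G ∨ K_p` of `G` with the complete graph on `p` vertices. -/
def joinK (G : SimpleGraph V) (p : ℕ) : SimpleGraph (V ⊕ Fin p) :=
  SimpleGraph.fromRel (fun a b =>
    match a, b with
    | Sum.inl u, Sum.inl v => G.Adj u v
    | _, _ => True)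

/-- The star `K_{1,s}`: center `none` adjacent to the `s` leaves. -/
def starGraph (s : ℕ) : SimpleGraph (Option (Fin s)) :=
  SimpleGraph.fromRel (fun a _ => a = none)

/-- The cycle graph `C_n` on `Fin n` (for `n ≥ 3`). -/
def cycGraph (n : ℕ) : SimpleGraph (Fin n) :=
  SimpleGraph.fromRel (fun a b => b.val = (a.val + 1) % n)

end ListColoringDefs

/-!
The `p` apex vertices of `G ∨ K_p` need `p` private colours, so `χ(G ∨ K_p) = χ(G) + p`.

Let `L` be a `(k+p-1)`-assignment from which `G ∨ K_p` is not colourable. Each list on `K_p` has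
at least `p` colours, so by Hall's theorem these lists have a system `C` of distinct
representatives, even one through any prescribed colour. Deleting `C` from the lists on `G` leaves
an assignment with lists of size at least `k-1` from which `G` is not colourable. A strong
`k`-chromatic-choosable graph is colourable as soon as one list is longer than `k-1`, so all
lists on `G` have exactly `k-1` colours outside `C`, contain `C`, and agree. Running `C` through
every colour of every list on `K_p` shows that those lists are the common list on `G` as well.
-/

open Function

theorem Finset.exists_injective_mem_of_card_le {ι α : Type*} [Fintype ι] (S : ι → Finset α)
    (hS : ∀ i, Fintype.card ι ≤ #(S i)) : ∃ c : ι → α, Injective c ∧ ∀ i, c i ∈ S i := by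
  classical
  refine (all_card_le_biUnion_card_iff_exists_injective S).1 fun s => ?_
  obtain rfl | ⟨i, hi⟩ := s.eq_empty_or_nonempty
  · simp
  · calc #s ≤ Fintype.card ι := card_le_univ s
      _ ≤ #(S i) := hS i
      _ ≤ #(s.biUnion S) := card_le_card (subset_biUnion_of_mem S hi)

theorem Finset.exists_injective_mem_of_card_le_of_mem {ι α : Type*} [Fintype ι] [DecidableEq ι]
    [DecidableEq α] (S : ι → Finset α) (hS : ∀ i, Fintype.card ι ≤ #(S i)) {i : ι} {x : α}
    (hx : x ∈ S i) : ∃ c : ι → α, Injective c ∧ (∀ j, c j ∈ S j) ∧ c i = x := by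
  obtain ⟨c, hc, hcS⟩ := exists_injective_mem_of_card_le (fun j : {j // ¬ j = i} => (S j).erase x)
    fun j => by
      have := pred_card_le_card_erase (s := S j) (a := x)
      have := hS j
      simp only [Fintype.card_subtype_compl, Fintype.card_unique]
      omega
  refine ⟨fun j => if h : j = i then x else c ⟨j, h⟩,
    Injective.dite _ (injective_of_subsingleton fun _ => x) hc
      fun h => (mem_erase.1 (hcS _)).1 h.symm,
    fun j => ?_, by simp⟩
  dsimp only
  split_ifs with h
  · exact h ▸ hx
  · exact mem_of_mem_erase (hcS _)

section JoinK

variable {V : Type*} (G : SimpleGraph V) (p : ℕ)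

@[simp]
lemma joinK_adj_inl_inl {u v : V} : (joinK G p).Adj (.inl u) (.inl v) ↔ G.Adj u v := by
  simp only [joinK, fromRel_adj, ne_eq, Sum.inl.injEq]
  exact ⟨fun ⟨_, h⟩ => h.elim id fun h => h.symm, fun h => ⟨h.ne, .inl h⟩⟩

@[simp]
lemma joinK_adj_inl_inr (u : V) (i : Fin p) : (joinK G p).Adj (.inl u) (.inr i) := by
  simp [joinK]

@[simp]
lemma joinK_adj_inr_inl (i : Fin p) (u : V) : (joinK G p).Adj (.inr i) (.inl u) :=
  (joinK_adj_inl_inr G p u i).symm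

@[simp]
lemma joinK_adj_inr_inr {i j : Fin p} : (joinK G p).Adj (.inr i) (.inr j) ↔ i ≠ j := by
  simp [joinK]

variable {G p}

def SimpleGraph.Coloring.joinK {α : Type*} (C : G.Coloring α) : (joinK G p).Coloring (α ⊕ Fin p) :=
  Coloring.mk (Sum.map C id) <| by
    rintro (u | i) (v | j) hadj <;> simp_all [C.valid]

variable (G p)

lemma colorable_joinK_iff {c : ℕ} : (joinK G p).Colorable c ↔ p ≤ c ∧ G.Colorable (c - p) := by
  classical
  constructor
  · rintro ⟨g⟩
    have hinj : Injective fun i : Fin p => g (.inr i) := fun i j hij => by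
      by_contra hne
      exact g.valid ((joinK_adj_inr_inr G p).2 hne) hij
    set S := univ.image fun i : Fin p => g (.inr i)
    have hS : #S = p := by simp [S, card_image_of_injective _ hinj]
    refine ⟨by simpa [hS] using card_le_univ S, ?_⟩
    have hG : G.Coloring {x // x ∉ S} :=
      Coloring.mk (fun v => ⟨g (.inl v), by simp [S, g.valid]⟩) ?_
    · simpa [Fintype.card_subtype_compl, hS] using hG.colorable
    · intro u v huv h
      exact g.valid ((joinK_adj_inl_inl G p).2 huv) (congrArg Subtype.val h)
  · rintro ⟨hp, ⟨C⟩⟩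
    simpa [Nat.sub_add_cancel hp] using (C.joinK (p := p)).colorable

lemma chromaticNumber_joinK : (joinK G p).chromaticNumber = G.chromaticNumber + p := by
  refine WithTop.eq_of_forall_le_coe_iff fun c => ?_
  change _ ≤ (c : ℕ∞) ↔ _ ≤ (c : ℕ∞)
  rw [chromaticNumber_le_iff_colorable, colorable_joinK_iff, ← chromaticNumber_le_iff_colorable]
  induction G.chromaticNumber using ENat.recTopCoe with
  | top => simp
  | coe a => norm_cast; omega

end JoinK

section ListColoring

variable {V : Type*} {G : SimpleGraph V}

lemma ListColorable.mono {L M : V → Finset ℕ} (hL : ListColorable G L) (h : ∀ v, L v ⊆ M v) :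
    ListColorable G M :=
  let ⟨f, hfL, hf⟩ := hL
  ⟨f, fun v => h v (hfL v), hf⟩

lemma StrongCC.nontrivial {k : ℕ} (h : StrongCC G k) (hk : 2 ≤ k) : Nontrivial V := by
  by_contra hV
  rw [not_nontrivial_iff_subsingleton] at hV
  have := G.chromaticNumber_le_one_of_subsingleton
  rw [h.1] at this
  norm_cast at this
  omega

lemma StrongCC.listColorable_of_card_le {k : ℕ} (h : StrongCC G k) (hk : 2 ≤ k)
    {M : V → Finset ℕ} (hM : ∀ v, k - 1 ≤ #(M v)) {v₀ : V} (hv₀ : k ≤ #(M v₀)) :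
    ListColorable G M := by
  classical
  have := h.nontrivial hk
  by_contra hnc
  choose T hTM hT using fun v => exists_subset_card_eq (hM v)
  obtain ⟨u, hu⟩ := exists_ne v₀
  -- Replacing `T v₀` by any `(k-1)`-subset `A` of `M v₀` leaves a non-colorable, hence constant,
  -- assignment, so every such `A` equals `T u`.
  have hA : ∀ A ∈ (M v₀).powersetCard (k - 1), A = T u := by
    intro A hA
    rw [mem_powersetCard] at hA
    have hconst := h.2 (update T v₀ A)
      (fun v => by rcases eq_or_ne v v₀ with rfl | hv <;> simp [*])
      (fun hc => hnc (hc.mono fun v => by rcases eq_or_ne v v₀ with rfl | hv <;> simp [*]))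
      v₀ u
    simpa [hu] using hconst
  have hcard : 1 < #((M v₀).powersetCard (k - 1)) := by
    rw [card_powersetCard]
    calc 1 < k := by omega
      _ = (k - 1 + 1).choose (k - 1) := by rw [Nat.choose_succ_self_right]; omega
      _ ≤ (#(M v₀)).choose (k - 1) := Nat.choose_le_choose _ (by omega)
  obtain ⟨A, hA', B, hB', hAB⟩ := one_lt_card.1 hcard
  exact hAB ((hA A hA').trans (hA B hB').symm)

variable {p : ℕ}

lemma ListColorable.joinK {L : V ⊕ Fin p → Finset ℕ} {c : Fin p → ℕ} (hc : Injective c)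
    (hcL : ∀ j, c j ∈ L (.inr j))
    (hG : ListColorable G fun v => L (.inl v) \ univ.image c) : ListColorable (joinK G p) L := by
  obtain ⟨f, hfL, hf⟩ := hG
  have hfc : ∀ v j, f v ≠ c j := fun v j hvj => (mem_sdiff.1 (hfL v)).2 (hvj ▸ by simp)
  refine ⟨Sum.elim f c, ?_, ?_⟩
  · rintro (v | j)
    exacts [sdiff_subset (hfL v), hcL j]
  · rintro (u | i) (v | j) huv
    · exact hf u v ((joinK_adj_inl_inl G p).1 huv)
    · exact hfc u j
    · exact (hfc v i).symm
    · exact hc.ne ((joinK_adj_inr_inr G p).1 huv)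

lemma StrongCC.subset_and_eq_of_not_listColorable_sdiff {k : ℕ} (h : StrongCC G k) (hk : 2 ≤ k)
    {M : V → Finset ℕ} {C : Finset ℕ} (hM : ∀ v, #(M v) = k - 1 + #C)
    (hnc : ¬ ListColorable G fun v => M v \ C) : (∀ v, C ⊆ M v) ∧ ∀ u v, M u = M v := by
  have hle : ∀ v, k - 1 ≤ #(M v \ C) := fun v => by
    have := le_card_sdiff C (M v)
    have := hM v
    omega
  have hcard : ∀ v, #(M v \ C) = k - 1 := fun v => by
    by_contra hv
    exact hnc (h.listColorable_of_card_le hk hle (v₀ := v) (by have := hle v; omega))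
  have hsub : ∀ v, C ⊆ M v := fun v => by
    have hunion : M v ∪ C = M v := (eq_of_subset_of_card_le subset_union_left (by
      rw [← card_sdiff_add_card, hcard, hM])).symm
    exact union_eq_left.1 hunion
  refine ⟨hsub, fun u v => ?_⟩
  rw [← sdiff_union_of_subset (hsub u), ← sdiff_union_of_subset (hsub v), h.2 _ hcard hnc u v]

theorem StrongCC.joinK {k : ℕ} (h : StrongCC G k) (hk : 2 ≤ k) (p : ℕ) :
    StrongCC (joinK G p) (k + p) := by
  classical
  refine ⟨by rw [chromaticNumber_joinK, h.1]; norm_cast, fun L hL hnc => ?_⟩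
  have hsdr : ∀ c : Fin p → ℕ, Injective c → (∀ j, c j ∈ L (.inr j)) →
      (∀ v, univ.image c ⊆ L (.inl v)) ∧ ∀ u v, L (.inl u) = L (.inl v) := fun c hc hcL =>
    h.subset_and_eq_of_not_listColorable_sdiff hk
      (fun v => by rw [hL, card_image_of_injective _ hc, card_univ, Fintype.card_fin]; omega)
      fun hG => hnc (hG.joinK hc hcL)
  have hcard : ∀ j, Fintype.card (Fin p) ≤ #(L (.inr j)) := fun j => by
    rw [hL, Fintype.card_fin]; omega
  obtain ⟨v₀⟩ := (h.nontrivial hk).to_nonempty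
  obtain ⟨c₀, hc₀, hc₀L⟩ := exists_injective_mem_of_card_le _ hcard
  have hall : ∀ a, L a = L (.inl v₀) := by
    rintro (v | j)
    · exact (hsdr c₀ hc₀ hc₀L).2 v v₀
    · refine eq_of_subset_of_card_le (fun x hx => ?_) (by rw [hL, hL])
      obtain ⟨c, hc, hcL, rfl⟩ := exists_injective_mem_of_card_le_of_mem _ hcard hx
      exact (hsdr c hc hcL).1 v₀ (mem_image_of_mem c (mem_univ j))
  exact fun a b => (hall a).trans (hall b).symm

end ListColoring

theorem edge_condition_join_of_excess_le {k n m p : ℕ} (hk : 2 ≤ k)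
    (hexcess : 2 * (m - n * (k - 2)) ≤ p * (2 * k + p - 3)) :
    m + p * (p - 1) / 2 + n * p ≤ (n + p) * (k + p - 2) := by
  obtain ⟨a, rfl⟩ : ∃ a, k = a + 2 := ⟨k - 2, by omega⟩
  rw [Nat.add_sub_cancel] at hexcess
  have hm : m ≤ n * a + (m - n * a) := by omega
  have hpp := Nat.two_mul_div_two_of_even (Nat.even_mul_pred_self p)
  generalize m - n * a = d at hm hexcess
  generalize p * (p - 1) / 2 = e at hpp
  rcases p with _ | q
  · simp_all
  · rw [show 2 * (a + 2) + (q + 1) - 3 = 2 * a + q + 2 by omega] at hexcess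
    rw [show a + 2 + (q + 1) - 2 = a + q + 1 by omega]
    simp only [Nat.add_sub_cancel] at hpp
    nlinarith

theorem stmt_9_general {V : Type*} (G : SimpleGraph V)
    (k n m : ℕ) (hk : 2 ≤ k) (h : StrongCC G k)
    (d : ℕ) (hd : d = m - n * (k - 2))
    (p : ℕ) (hdp : 2 * d ≤ p * (2 * k + p - 3)) :
    StrongCC (joinK G p) (k + p) ∧
      m + p * (p - 1) / 2 + n * p ≤ (n + p) * (k + p - 2) :=
  ⟨h.joinK hk p, edge_condition_join_of_excess_le hk (hd ▸ hdp)⟩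

/-- joining with a large enough complete graph restores the edge condition. -/
theorem stmt_9 {V : Type*} [Fintype V] (G : SimpleGraph V) [Fintype G.edgeSet]
    (k n m : ℕ) (hk : 2 ≤ k) (h : StrongCC G k)
    (hn : Fintype.card V = n) (hm : G.edgeFinset.card = m)
    (hviol : n * (k - 2) < m) (d : ℕ) (hd : d = m - n * (k - 2))
    (p : ℕ) (hp : 1 ≤ p) (hdp : 2 * d ≤ p * (2 * k + p - 3)) :
    StrongCC (joinK G p) (k + p) ∧
      m + p * (p - 1) / 2 + n * p ≤ (n + p) * (k + p - 2) :=
  stmt_9_general G k n m hk h d hd p hdp
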